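/- arXiv:2304.00047 — 5 statements merged into one kernel-verified Lean document; each statement's English description precedes it below -/
import Mathlib

section
/- For every value o of the observation with Pr[Obs = o] > 0 and every encoder T in the family F, the posterior probability satisfies: Pr[T_A = T | Obs = o] = Pr[T_A = T] / Pr[T_A ∈ Pos(o)] if T ∈ Pos(o), and Pr[T_A = T | Obs = o] = 0 if T ∉ Pos(o). -/
open scoped Classical

noncomputable def Pr {Ω : Type*} [Fintype Ω] (w : Ω → ℝ) (A : Set Ω) : ℝ :=
  ∑ ω, if ω ∈ A then w ω else 0

noncomputable def entropy {Ω α : Type*} [Fintype Ω] [Fintype α] (w : Ω → ℝ) (V : Ω → α) : ℝ :=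
  -∑ a, Pr w {ω | V ω = a} * Real.logb 2 (Pr w {ω | V ω = a})

noncomputable def condEntropy {Ω α β : Type*} [Fintype Ω] [Fintype α] [Fintype β]
    (w : Ω → ℝ) (V : Ω → α) (W : Ω → β) : ℝ :=
  entropy w (fun ω => (V ω, W ω)) - entropy w W

lemma Pr_nonneg {Ω : Type*} [Fintype Ω] (w : Ω → ℝ) (hw0 : ∀ ω, 0 ≤ w ω) (A : Set Ω) :
    0 ≤ Pr w A := by
  unfold Pr
  apply Finset.sum_nonneg
  intro ω _
  split
  · exact hw0 ω
  · exact le_rfl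

lemma Pr_ext {Ω : Type*} [Fintype Ω] (w : Ω → ℝ) {A B : Set Ω}
    (h : ∀ ω, ω ∈ A ↔ ω ∈ B) : Pr w A = Pr w B := by
  unfold Pr; exact Finset.sum_congr rfl fun ω _ => if_congr (h ω) rfl rfl

lemma Pr_zero {Ω : Type*} [Fintype Ω] (w : Ω → ℝ) {A : Set Ω}
    (h : ∀ ω, ω ∉ A) : Pr w A = 0 := by
  unfold Pr; exact Finset.sum_eq_zero fun ω _ => by simp [h ω]

lemma le_Pr {Ω : Type*} [Fintype Ω] (w : Ω → ℝ) (hw0 : ∀ ω, 0 ≤ w ω) {A : Set Ω}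
    {ω₀ : Ω} (hω : ω₀ ∈ A) : w ω₀ ≤ Pr w A := by
  unfold Pr
  have h := Finset.single_le_sum (f := fun ω => if ω ∈ A then w ω else 0)
    (fun ω _ => by split; exacts [hw0 ω, le_rfl])
    (Finset.mem_univ ω₀)
  simpa [hω] using h

lemma Pr_exists_pos {Ω : Type*} [Fintype Ω] (w : Ω → ℝ) (hw0 : ∀ ω, 0 ≤ w ω) {A : Set Ω}
    (h : 0 < Pr w A) : ∃ ω, ω ∈ A ∧ 0 < w ω := by
  by_contra hc
  push_neg at hc
  have h0 : Pr w A = 0 := Finset.sum_eq_zero fun ω _ => by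
    by_cases hA : ω ∈ A
    · simp [hA, le_antisymm (hc ω hA) (hw0 ω)]
    · simp [hA]
  exact h.ne' h0

lemma Pr_fiber {Ω α : Type*} [Fintype Ω] [Fintype α] (w : Ω → ℝ)
    (P : Ω → Prop) (V : Ω → α) :
    Pr w {ω | P ω} = ∑ a, Pr w {ω | P ω ∧ V ω = a} := by
  unfold Pr
  rw [Finset.sum_comm]
  apply Finset.sum_congr rfl
  intro ω _
  by_cases hP : P ω
  · simp [Set.mem_setOf_eq, hP, Finset.sum_ite_eq]
  · simp [Set.mem_setOf_eq, hP]

/-- Theorem 1 of the paper.  For every observation value `o` with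
`Pr[Obs = o] > 0` and every encoder `T` in the family `F = {T | Pr[T_A = T] > 0}`, the
posterior satisfies `Pr[T_A = T | Obs = o] = Pr[T_A = T] / Pr[T_A ∈ Pos o]` if `T ∈ Pos o`,
and `Pr[T_A = T | Obs = o] = 0` otherwise. -/
theorem stmt0
    {Ω X Z Y : Type*} [Fintype Ω] [Fintype X] [Fintype Z] [Fintype Y]
    [DecidableEq X] [DecidableEq Z] [DecidableEq Y]
    (w : Ω → ℝ) (hw0 : ∀ ω, 0 ≤ w ω) (hw1 : ∑ ω, w ω = 1)
    (L : X → Y) (XA : Ω → Finset X) (TA : Ω → X → Z)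
    -- every encoder in the support of `T_A` is injective
    (hinj : ∀ T : X → Z, 0 < Pr w {ω | TA ω = T} → Function.Injective T)
    -- `T_A` is independent of `𝒳_A`
    (hindep : ∀ (T : X → Z) (S : Finset X),
      Pr w {ω | TA ω = T ∧ XA ω = S} = Pr w {ω | TA ω = T} * Pr w {ω | XA ω = S})
    -- Assumption 1: the distribution of `𝒳_A` depends only on the cardinality
    (hassump : ∀ S₁ S₂ : Finset X, S₁.card = S₂.card →
      Pr w {ω | XA ω = S₁} = Pr w {ω | XA ω = S₂})
    (Obs : Ω → Finset (Z × Y))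
    (hObs : ∀ ω, Obs ω = (XA ω).image (fun x => (TA ω x, L x)))
    (o : Finset (Z × Y)) (ho : 0 < Pr w {ω | Obs ω = o})
    (Pos : Set (X → Z))
    (hPos : Pos = {T : X → Z | 0 < Pr w {ω | TA ω = T} ∧
      ∃ S : Finset X, S.image (fun x => (T x, L x)) = o})
    (T : X → Z) (hT : 0 < Pr w {ω | TA ω = T}) :
    (T ∈ Pos →
      Pr w {ω | TA ω = T ∧ Obs ω = o} / Pr w {ω | Obs ω = o}
        = Pr w {ω | TA ω = T} / Pr w {ω | TA ω ∈ Pos}) ∧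
    (T ∉ Pos →
      Pr w {ω | TA ω = T ∧ Obs ω = o} / Pr w {ω | Obs ω = o} = 0) := by
  -- find a witness ω₀ with positive weight and Obs ω₀ = o
  obtain ⟨ω₀, hω₀o, hω₀w⟩ := Pr_exists_pos w hw0 ho
  have hω₀o' : Obs ω₀ = o := hω₀o
  have hT₀pos : 0 < Pr w {ω | TA ω = TA ω₀} :=
    lt_of_lt_of_le hω₀w (le_Pr w hw0 (by simp [Set.mem_setOf_eq]))
  have hT₀inj : Function.Injective (TA ω₀) := hinj _ hT₀pos
  have hfT₀inj : Function.Injective (fun x => (TA ω₀ x, L x)) := fun x y h =>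
    hT₀inj (congrArg Prod.fst h)
  have hS₀ : (XA ω₀).image (fun x => (TA ω₀ x, L x)) = o := (hObs ω₀).symm.trans hω₀o'
  have hcard₀ : (XA ω₀).card = o.card := by
    rw [← hS₀, Finset.card_image_of_injective _ hfT₀inj]
  -- the common probability of a dataset of cardinality |o|
  set c : ℝ := Pr w {ω | XA ω = XA ω₀} with hc_def
  have hc_eq : ∀ S : Finset X, S.card = o.card → Pr w {ω | XA ω = S} = c := fun S hS =>
    hassump S (XA ω₀) (hS.trans hcard₀.symm)
  have hcnn : 0 ≤ c := Pr_nonneg w hw0 _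
  -- numerator formula
  have hnum : ∀ T' : X → Z, Pr w {ω | TA ω = T' ∧ Obs ω = o}
      = if T' ∈ Pos then Pr w {ω | TA ω = T'} * c else 0 := by
    intro T'
    have hsum : Pr w {ω | TA ω = T' ∧ Obs ω = o}
        = ∑ S : Finset X, if S.image (fun x => (T' x, L x)) = o
            then Pr w {ω | TA ω = T'} * Pr w {ω | XA ω = S} else 0 := by
      rw [Pr_fiber w (fun ω => TA ω = T' ∧ Obs ω = o) XA]
      apply Finset.sum_congr rfl
      intro S _
      by_cases hS : S.image (fun x => (T' x, L x)) = o
      · rw [if_pos hS, ← hindep T' S]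
        apply Pr_ext
        intro ω
        simp only [Set.mem_setOf_eq]
        constructor
        · rintro ⟨⟨h1, _⟩, h3⟩; exact ⟨h1, h3⟩
        · rintro ⟨h1, h3⟩
          refine ⟨⟨h1, ?_⟩, h3⟩
          rw [hObs ω, h3, h1]
          exact hS
      · rw [if_neg hS]
        apply Pr_zero
        rintro ω ⟨⟨h1, h2⟩, h3⟩
        exact hS (by rw [← h2, hObs ω, h3, h1])
    rw [hsum]
    by_cases hTP : T' ∈ Pos
    · rw [if_pos hTP]
      rw [hPos] at hTP
      obtain ⟨hTpos, S_T, hST⟩ := hTP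
      have hfinj : Function.Injective (fun x => (T' x, L x)) := fun x y h =>
        (hinj T' hTpos) (congrArg Prod.fst h)
      have hcardS : S_T.card = o.card := by
        rw [← hST, Finset.card_image_of_injective _ hfinj]
      have hterm : ∀ S : Finset X,
          (if S.image (fun x => (T' x, L x)) = o
            then Pr w {ω | TA ω = T'} * Pr w {ω | XA ω = S} else 0)
          = if S = S_T then Pr w {ω | TA ω = T'} * c else 0 := by
        intro S
        by_cases hSe : S = S_T
        · subst hSe
          rw [if_pos hST, if_pos rfl, hc_eq S hcardS]
        · rw [if_neg hSe, if_neg]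
          intro hS
          exact hSe (Finset.image_injective hfinj (hS.trans hST.symm))
      rw [Finset.sum_congr rfl (fun S _ => hterm S)]
      simp
    · rw [if_neg hTP]
      apply Finset.sum_eq_zero
      intro S _
      by_cases hp : 0 < Pr w {ω | TA ω = T'}
      · rw [if_neg]
        intro hS
        exact hTP (by rw [hPos]; exact ⟨hp, S, hS⟩)
      · have hp0 : Pr w {ω | TA ω = T'} = 0 :=
          le_antisymm (not_lt.1 hp) (Pr_nonneg w hw0 _)
        split <;> simp [hp0]
  -- denominator formula
  have hPrPos : Pr w {ω | TA ω ∈ Pos}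
      = ∑ T' : X → Z, if T' ∈ Pos then Pr w {ω | TA ω = T'} else 0 := by
    rw [Pr_fiber w (fun ω => TA ω ∈ Pos) TA]
    apply Finset.sum_congr rfl
    intro T' _
    by_cases hTP : T' ∈ Pos
    · rw [if_pos hTP]
      apply Pr_ext
      intro ω
      simp only [Set.mem_setOf_eq]
      exact ⟨fun h => h.2, fun h => ⟨h ▸ hTP, h⟩⟩
    · rw [if_neg hTP]
      apply Pr_zero
      rintro ω ⟨h1, h2⟩
      exact hTP (h2 ▸ h1)
  have hden : Pr w {ω | Obs ω = o} = c * Pr w {ω | TA ω ∈ Pos} := by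
    rw [Pr_fiber w (fun ω => Obs ω = o) TA, hPrPos, Finset.mul_sum]
    apply Finset.sum_congr rfl
    intro T' _
    have hcomm : Pr w {ω | Obs ω = o ∧ TA ω = T'} = Pr w {ω | TA ω = T' ∧ Obs ω = o} :=
      Pr_ext w fun ω => by simp only [Set.mem_setOf_eq]; exact and_comm
    rw [hcomm, hnum T']
    by_cases hTP : T' ∈ Pos <;> simp [hTP, mul_comm]
  have hdpos := ho
  rw [hden] at hdpos
  have hcne : c ≠ 0 := by
    intro h; rw [h, zero_mul] at hdpos; exact lt_irrefl 0 hdpos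
  have hPne : Pr w {ω | TA ω ∈ Pos} ≠ 0 := by
    intro h; rw [h, mul_zero] at hdpos; exact lt_irrefl 0 hdpos
  constructor
  · intro hTP
    rw [hnum T, if_pos hTP, hden]
    field_simp
  · intro hTP
    rw [hnum T, if_neg hTP, zero_div]
end

section
/- For every value o of the observation with Pr[Obs = o] > 0, an encoder T* ∈ F maximizes the posterior T ↦ Pr[T_A = T | Obs = o] over F if and only if T* ∈ Pos(o) and T* maximizes the prior T ↦ Pr[T_A = T] over Pos(o). In other words, the optimal attack argmax_{T ∈ F} Pr[T_A = T | Obs = o] equals argmax_{T ∈ Pos(o)} Pr[T_A = T]. -/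
open scoped Classical

/-- Corollary 1 of the paper.  For every observation value `o` with
`Pr[Obs = o] > 0`, an encoder `T⋆ ∈ F` maximizes the posterior `T ↦ Pr[T_A = T | Obs = o]`
over `F` if and only if `T⋆ ∈ Pos o` and `T⋆` maximizes the prior `T ↦ Pr[T_A = T]` over
`Pos o`. -/
theorem stmt1
    {Ω X Z Y : Type*} [Fintype Ω] [Fintype X] [Fintype Z] [Fintype Y]
    [DecidableEq X] [DecidableEq Z] [DecidableEq Y]
    (w : Ω → ℝ) (hw0 : ∀ ω, 0 ≤ w ω) (hw1 : ∑ ω, w ω = 1)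
    (L : X → Y) (XA : Ω → Finset X) (TA : Ω → X → Z)
    -- every encoder in the support of `T_A` is injective
    (hinj : ∀ T : X → Z, 0 < Pr w {ω | TA ω = T} → Function.Injective T)
    -- `T_A` is independent of `𝒳_A`
    (hindep : ∀ (T : X → Z) (S : Finset X),
      Pr w {ω | TA ω = T ∧ XA ω = S} = Pr w {ω | TA ω = T} * Pr w {ω | XA ω = S})
    -- Assumption 1: the distribution of `𝒳_A` depends only on the cardinality
    (hassump : ∀ S₁ S₂ : Finset X, S₁.card = S₂.card →
      Pr w {ω | XA ω = S₁} = Pr w {ω | XA ω = S₂})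
    (Obs : Ω → Finset (Z × Y))
    (hObs : ∀ ω, Obs ω = (XA ω).image (fun x => (TA ω x, L x)))
    (o : Finset (Z × Y)) (ho : 0 < Pr w {ω | Obs ω = o})
    (Pos : Set (X → Z))
    (hPos : Pos = {T : X → Z | 0 < Pr w {ω | TA ω = T} ∧
      ∃ S : Finset X, S.image (fun x => (T x, L x)) = o})
    (Tstar : X → Z) (hTstar : 0 < Pr w {ω | TA ω = Tstar}) :
    (∀ T : X → Z, 0 < Pr w {ω | TA ω = T} →
        Pr w {ω | TA ω = T ∧ Obs ω = o} / Pr w {ω | Obs ω = o}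
          ≤ Pr w {ω | TA ω = Tstar ∧ Obs ω = o} / Pr w {ω | Obs ω = o})
      ↔ (Tstar ∈ Pos ∧ ∀ T ∈ Pos, Pr w {ω | TA ω = T} ≤ Pr w {ω | TA ω = Tstar}) := by
  classical
  have hPrnn : ∀ A : Set Ω, 0 ≤ Pr w A := fun A =>
    Finset.sum_nonneg fun ω _ => by by_cases h : ω ∈ A <;> simp [h, hw0 ω]
  have hPrle : ∀ (A : Set Ω) (ω : Ω), ω ∈ A → w ω ≤ Pr w A := by
    intro A ω hω
    have := Finset.single_le_sum (f := fun ω => if ω ∈ A then w ω else 0)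
      (fun i _ => by split <;> simp [hw0 i]) (Finset.mem_univ ω)
    simpa [Pr, hω] using this
  obtain ⟨ω₀, hw₀, hObs₀⟩ : ∃ ω, 0 < w ω ∧ Obs ω = o := by
    by_contra hcon
    push_neg at hcon
    have h0 : Pr w {ω | Obs ω = o} = 0 := by
      apply Finset.sum_eq_zero
      intro ω _
      split
      · rename_i h
        exact le_antisymm (not_lt.1 fun hpos => hcon ω hpos h) (hw0 ω)
      · rfl
    linarith
  have hTS₁ : 0 < Pr w {ω | TA ω = TA ω₀ ∧ XA ω = XA ω₀} :=
    lt_of_lt_of_le hw₀ (hPrle _ ω₀ ⟨rfl, rfl⟩)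
  have hmul : 0 < Pr w {ω | TA ω = TA ω₀} * Pr w {ω | XA ω = XA ω₀} := by
    rw [← hindep]; exact hTS₁
  have hT₁pos : 0 < Pr w {ω | TA ω = TA ω₀} :=
    ((mul_pos_iff.mp hmul).resolve_right fun h => absurd h.2 (not_lt.2 (hPrnn _))).1
  have hc : 0 < Pr w {ω | XA ω = XA ω₀} :=
    ((mul_pos_iff.mp hmul).resolve_right fun h => absurd h.2 (not_lt.2 (hPrnn _))).2
  have hT₁inj : Function.Injective (TA ω₀) := hinj _ hT₁pos
  have himg₁ : (XA ω₀).image (fun x => (TA ω₀ x, L x)) = o := (hObs ω₀).symm.trans hObs₀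
  have hf₁inj : Function.Injective (fun x => (TA ω₀ x, L x)) :=
    fun a b h => hT₁inj (congrArg Prod.fst h)
  have hcard₁ : (XA ω₀).card = o.card := by
    rw [← himg₁, Finset.card_image_of_injective _ hf₁inj]
  have hdecomp : ∀ T : X → Z,
      Pr w {ω | TA ω = T ∧ Obs ω = o}
        = ∑ S ∈ Finset.univ.filter (fun S : Finset X => S.image (fun x => (T x, L x)) = o),
            Pr w {ω | TA ω = T ∧ XA ω = S} := by
    intro T
    unfold Pr
    symm
    rw [Finset.sum_comm]
    refine Finset.sum_congr rfl fun ω _ => ?_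
    simp only [Set.mem_setOf_eq]
    by_cases hT : TA ω = T
    · simp only [hT, eq_self_iff_true, true_and]
      rw [Finset.sum_ite_eq (Finset.univ.filter _) (XA ω) (fun _ => w ω)]
      simp only [Finset.mem_filter, Finset.mem_univ, true_and]
      by_cases hO : Obs ω = o
      · rw [if_pos, if_pos hO]
        rw [hObs, hT] at hO
        exact hO
      · rw [if_neg, if_neg hO]
        intro hcc
        exact hO (by rw [hObs ω, hT]; exact hcc)
    · simp [hT]
  have hkey : ∀ T : X → Z, Function.Injective T →
      ∀ S : Finset X, S.image (fun x => (T x, L x)) = o →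
      Pr w {ω | TA ω = T ∧ Obs ω = o}
        = Pr w {ω | TA ω = T} * Pr w {ω | XA ω = XA ω₀} := by
    intro T hTinj S hS
    have hfinj : Function.Injective (fun x => (T x, L x)) :=
      fun a b h => hTinj (congrArg Prod.fst h)
    have hfilter : Finset.univ.filter
        (fun S' : Finset X => S'.image (fun x => (T x, L x)) = o) = {S} := by
      ext S'
      simp only [Finset.mem_filter, Finset.mem_univ, true_and, Finset.mem_singleton]
      constructor
      · intro h; exact Finset.image_injective hfinj (h.trans hS.symm)
      · rintro rfl; exact hS
    rw [hdecomp T, hfilter, Finset.sum_singleton, hindep T S]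
    congr 1
    apply hassump
    rw [← Finset.card_image_of_injective S hfinj, hS]
    exact hcard₁.symm
  have hzero : ∀ T : X → Z, (¬ ∃ S : Finset X, S.image (fun x => (T x, L x)) = o) →
      Pr w {ω | TA ω = T ∧ Obs ω = o} = 0 := by
    intro T hno
    rw [hdecomp T]
    apply Finset.sum_eq_zero
    intro S hSmem
    exact (hno ⟨S, (Finset.mem_filter.mp hSmem).2⟩).elim
  constructor
  · intro h
    have hT₁f := hkey (TA ω₀) hT₁inj (XA ω₀) himg₁
    have hTstarPos : Tstar ∈ Pos := by
      rw [hPos]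
      refine ⟨hTstar, ?_⟩
      by_contra hno
      have h0 := hzero Tstar hno
      have h1 := h (TA ω₀) hT₁pos
      rw [h0, hT₁f] at h1
      have h2 : 0 < Pr w {ω | TA ω = TA ω₀} * Pr w {ω | XA ω = XA ω₀} / Pr w {ω | Obs ω = o} :=
        div_pos (mul_pos hT₁pos hc) ho
      simp only [zero_div] at h1
      linarith
    refine ⟨hTstarPos, ?_⟩
    intro T hT
    rw [hPos] at hT hTstarPos
    obtain ⟨hTpos, S, hS⟩ := hT
    obtain ⟨_, S', hS'⟩ := hTstarPos
    have h1 := h T hTpos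
    rw [hkey T (hinj T hTpos) S hS, hkey Tstar (hinj Tstar hTstar) S' hS'] at h1
    have h2 := (div_le_div_iff₀ ho ho).mp h1
    nlinarith [mul_pos hc ho]
  · rintro ⟨hmem, hmax⟩ T hTpos
    rw [hPos] at hmem
    obtain ⟨_, S', hS'⟩ := hmem
    have hstar := hkey Tstar (hinj Tstar hTstar) S' hS'
    by_cases hTin : ∃ S : Finset X, S.image (fun x => (T x, L x)) = o
    · obtain ⟨S, hS⟩ := hTin
      rw [hkey T (hinj T hTpos) S hS, hstar]
      have hle := hmax T (by rw [hPos]; exact ⟨hTpos, S, hS⟩)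
      have h2 : Pr w {ω | TA ω = T} * Pr w {ω | XA ω = XA ω₀}
          ≤ Pr w {ω | TA ω = Tstar} * Pr w {ω | XA ω = XA ω₀} :=
        mul_le_mul_of_nonneg_right hle hc.le
      exact div_le_div_of_nonneg_right h2 ho.le
    · rw [hzero T hTin, hstar]
      simp only [zero_div]
      exact div_nonneg (mul_nonneg (hPrnn _) hc.le) ho.le
end

section
/- The privacy score decomposes as knowledge about the data plus residual knowledge about the encoder: H(T_A | Obs) = H(𝒳_A | Obs) + H(T_A | 𝒳_A, Obs), where the second term is the conditional entropy of the encoder given both the dataset and the observation. -/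
open scoped Classical

lemma entropy_comp {Ω α β : Type*} [Fintype Ω] [Fintype α] [Fintype β]
    (w : Ω → ℝ) (hw0 : ∀ ω, 0 ≤ w ω) (f : α → β) (hf : Function.Injective f)
    (V : Ω → α) (W : Ω → β) (h : ∀ ω, 0 < w ω → W ω = f (V ω)) :
    entropy w W = entropy w V := by
  have h1 : ∀ a, Pr w {ω | W ω = f a} = Pr w {ω | V ω = a} := by
    intro a
    unfold Pr
    refine Finset.sum_congr rfl fun ω _ => ?_
    by_cases hz : 0 < w ω
    · simp [Set.mem_setOf_eq, h ω hz, hf.eq_iff]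
    · have : w ω = 0 := le_antisymm (not_lt.mp hz) (hw0 ω)
      split_ifs <;> simp [this]
  have h2 : ∀ b, (∀ a, b ≠ f a) → Pr w {ω | W ω = b} = 0 := by
    intro b hb
    unfold Pr
    refine Finset.sum_eq_zero fun ω _ => ?_
    by_cases hz : 0 < w ω
    · have : W ω ≠ b := by rw [h ω hz]; exact (hb (V ω)).symm ∘ Eq.symm ∘ Eq.symm
      simp [Set.mem_setOf_eq, this]
    · have : w ω = 0 := le_antisymm (not_lt.mp hz) (hw0 ω)
      split_ifs <;> simp [this]
  unfold entropy
  congr 1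
  rw [← Finset.sum_subset (Finset.subset_univ (Finset.univ.image f))]
  · rw [Finset.sum_image (fun a _ b _ hab => hf hab)]
    exact Finset.sum_congr rfl fun a _ => by rw [h1 a]
  · intro b _ hb
    have hb' : ∀ a, b ≠ f a := by
      intro a ha
      exact hb (Finset.mem_image.mpr ⟨a, Finset.mem_univ a, ha.symm⟩)
    simp [h2 b hb']

/-- Proposition 2 of the paper.  The privacy score decomposes as
knowledge about the data plus residual knowledge about the encoder:
`H(T_A | Obs) = H(𝒳_A | Obs) + H(T_A | 𝒳_A, Obs)`. -/
theorem stmt8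
    {Ω X Z Y : Type*} [Fintype Ω] [Fintype X] [Fintype Z] [Fintype Y]
    [DecidableEq X] [DecidableEq Z] [DecidableEq Y]
    (w : Ω → ℝ) (hw0 : ∀ ω, 0 ≤ w ω) (hw1 : ∑ ω, w ω = 1)
    (L : X → Y) (XA : Ω → Finset X) (TA : Ω → X → Z)
    -- every encoder in the support of `T_A` is injective
    (hinj : ∀ T : X → Z, 0 < Pr w {ω | TA ω = T} → Function.Injective T)
    (Obs : Ω → Finset (Z × Y))
    (hObs : ∀ ω, Obs ω = (XA ω).image (fun x => (TA ω x, L x))) :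
    condEntropy w TA Obs
      = condEntropy w XA Obs + condEntropy w TA (fun ω => (XA ω, Obs ω)) := by
  have key : entropy w (fun ω => (TA ω, (XA ω, Obs ω)))
      = entropy w (fun ω => (TA ω, Obs ω)) := by
    refine entropy_comp w hw0
      (f := fun p : (X → Z) × Finset (Z × Y) =>
        (p.1, (Finset.univ.filter (fun x => (p.1 x, L x) ∈ p.2), p.2)))
      ?_ _ _ ?_
    · intro p q hpq
      simp only [Prod.mk.injEq] at hpq
      exact Prod.ext hpq.1 hpq.2.2
    · intro ω hz
      have hT : Function.Injective (TA ω) := by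
        apply hinj
        unfold Pr
        refine Finset.sum_pos' (fun ω' _ => ?_) ⟨ω, Finset.mem_univ ω, ?_⟩
        · split_ifs
          · exact hw0 ω'
          · exact le_refl 0
        · simpa [Set.mem_setOf_eq] using hz
      have hX : XA ω = Finset.univ.filter (fun x => (TA ω x, L x) ∈ Obs ω) := by
        ext x
        simp only [Finset.mem_filter, Finset.mem_univ, true_and, hObs ω,
          Finset.mem_image]
        constructor
        · intro hx; exact ⟨x, hx, rfl⟩
        · rintro ⟨x', hx', heq⟩
          have := hT (congrArg Prod.fst heq)
          rwa [this] at hx'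
      simp only
      rw [← hX]
  unfold condEntropy
  rw [key]
  ring
end

section
/- If the encoder is determined by the dataset together with the observation, i.e. H(T_A | 𝒳_A, Obs) = 0, then the adversary has the same average uncertainty about Alice's encoder as about Alice's dataset: H(T_A | Obs) = H(𝒳_A | Obs). -/
open scoped Classical

lemma entropy_eq_of_inj {Ω α β : Type*} [Fintype Ω] [Fintype α] [Fintype β]
    (w : Ω → ℝ) (V : Ω → α) (V' : Ω → β) (f : α → β) (hf : Function.Injective f)
    (hV : ∀ ω, w ω ≠ 0 → V' ω = f (V ω)) :
    entropy w V' = entropy w V := by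
  unfold entropy
  congr 1
  rw [← Finset.sum_subset (Finset.subset_univ (Finset.univ.image f))]
  · rw [Finset.sum_image (fun a _ b _ hab => hf hab)]
    refine Finset.sum_congr rfl fun a _ => ?_
    have hpr : Pr w {ω | V' ω = f a} = Pr w {ω | V ω = a} := by
      unfold Pr
      refine Finset.sum_congr rfl fun ω _ => ?_
      by_cases hw : w ω = 0
      · simp [hw]
      · simp only [Set.mem_setOf_eq, hV ω hw, hf.eq_iff]
    rw [hpr]
  · intro b _ hb
    have hpr : Pr w {ω | V' ω = b} = 0 := by
      unfold Pr
      refine Finset.sum_eq_zero fun ω _ => ?_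
      by_cases hw : w ω = 0
      · simp [hw]
      · have hne : V' ω ≠ b := by
          rw [hV ω hw]
          intro hc
          exact hb (by simp [← hc])
        simp [hne]
    simp [hpr]

/-- Corollary 2 of the paper.  If the encoder is determined by the
dataset together with the observation, i.e. `H(T_A | 𝒳_A, Obs) = 0`, then the adversary
has the same average uncertainty about Alice's encoder as about Alice's dataset:
`H(T_A | Obs) = H(𝒳_A | Obs)`. -/
theorem stmt10
    {Ω X Z Y : Type*} [Fintype Ω] [Fintype X] [Fintype Z] [Fintype Y]
    [DecidableEq X] [DecidableEq Z] [DecidableEq Y]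
    (w : Ω → ℝ) (hw0 : ∀ ω, 0 ≤ w ω) (hw1 : ∑ ω, w ω = 1)
    (L : X → Y) (XA : Ω → Finset X) (TA : Ω → X → Z)
    -- every encoder in the support of `T_A` is injective
    (hinj : ∀ T : X → Z, 0 < Pr w {ω | TA ω = T} → Function.Injective T)
    (Obs : Ω → Finset (Z × Y))
    (hObs : ∀ ω, Obs ω = (XA ω).image (fun x => (TA ω x, L x)))
    (h : condEntropy w TA (fun ω => (XA ω, Obs ω)) = 0) :
    condEntropy w TA Obs = condEntropy w XA Obs := by
  have key : entropy w (fun ω => (TA ω, Obs ω)) = entropy w (fun ω => (XA ω, Obs ω)) := by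
    have h2 : entropy w (fun ω => (TA ω, (XA ω, Obs ω)))
        = entropy w (fun ω => (XA ω, Obs ω)) := by
      unfold condEntropy at h; linarith
    rw [← h2]
    refine (entropy_eq_of_inj w (fun ω => (TA ω, Obs ω))
      (fun ω => (TA ω, (XA ω, Obs ω)))
      (fun p => (p.1, (Finset.univ.filter (fun x => (p.1 x, L x) ∈ p.2), p.2)))
      ?_ ?_).symm
    · intro p q hpq
      simp only [Prod.mk.injEq] at hpq
      exact Prod.ext hpq.1 hpq.2.2
    · intro ω hw
      have hwpos : 0 < w ω := lt_of_le_of_ne (hw0 ω) (Ne.symm hw)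
      have hTinj : Function.Injective (TA ω) := by
        apply hinj
        unfold Pr
        refine Finset.sum_pos' (fun i _ => ?_) ⟨ω, Finset.mem_univ ω, ?_⟩
        · split
          · exact hw0 i
          · exact le_rfl
        · rw [if_pos (show ω ∈ {ω' | TA ω' = TA ω} from rfl)]
          exact hwpos
      have hXA : XA ω = Finset.univ.filter (fun x => (TA ω x, L x) ∈ Obs ω) := by
        ext x
        simp only [Finset.mem_filter, Finset.mem_univ, true_and, hObs ω, Finset.mem_image]
        constructor
        · intro hx; exact ⟨x, hx, rfl⟩
        · rintro ⟨x', hx', hxx⟩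
          have : TA ω x' = TA ω x := congrArg Prod.fst hxx
          rwa [← hTinj this]
      simp only
      rw [← hXA]
  unfold condEntropy
  rw [key]
end

section
/- The conditional entropy of owner d's encoded labeling function given the combined encoded data of all owners satisfies the identity H(L_d | (O_0, …, O_{D−1})) = H(L_d | O_d) + H((O_{d'})_{d'≠d} | T_d(𝒳_d), L_d) − H((O_{d'})_{d'≠d} | O_d). -/
open scoped Classical

lemma Pr_empty {Ω : Type*} [Fintype Ω] (w : Ω → ℝ) : Pr w (∅ : Set Ω) = 0 := by
  simp [Pr]

lemma entropy_comp_equiv {Ω α β : Type*} [Fintype Ω] [Fintype α] [Fintype β]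
    (w : Ω → ℝ) (V : Ω → α) (e : α ≃ β) :
    entropy w (fun ω => e (V ω)) = entropy w V := by
  unfold entropy
  congr 1
  rw [← e.sum_comp (fun b => Pr w {ω | e (V ω) = b} * Real.logb 2 (Pr w {ω | e (V ω) = b}))]
  apply Finset.sum_congr rfl
  intro a _
  have h : {ω | e (V ω) = e a} = {ω | V ω = a} := by
    ext ω; simp
  rw [h]

lemma entropy_pair_comp {Ω α β : Type*} [Fintype Ω] [Fintype α] [Fintype β]
    (w : Ω → ℝ) (V : Ω → α) (g : α → β) :
    entropy w (fun ω => (V ω, g (V ω))) = entropy w V := by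
  unfold entropy
  congr 1
  rw [Fintype.sum_prod_type]
  apply Finset.sum_congr rfl
  intro a _
  rw [Finset.sum_eq_single (g a)]
  · have h : {ω | (V ω, g (V ω)) = (a, g a)} = {ω | V ω = a} := by
      ext ω; simp only [Set.mem_setOf_eq, Prod.mk.injEq]
      constructor
      · rintro ⟨h1, _⟩; exact h1
      · intro h1; exact ⟨h1, by rw [h1]⟩
    rw [h]
  · intro b _ hb
    have h : {ω | (V ω, g (V ω)) = (a, b)} = (∅ : Set Ω) := by
      ext ω; simp only [Set.mem_setOf_eq, Prod.mk.injEq, Set.mem_empty_iff_false, iff_false]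
      rintro ⟨h1, h2⟩; exact hb (h1 ▸ h2.symm ▸ rfl)
    rw [h, Pr_empty, zero_mul]
  · intro h; exact absurd (Finset.mem_univ _) h

lemma entropy_congr {Ω α β : Type*} [Fintype Ω] [Fintype α] [Fintype β]
    (w : Ω → ℝ) {V : Ω → α} {W : Ω → β} (g : α → β) (h : β → α)
    (hg : ∀ ω, g (V ω) = W ω) (hh : ∀ ω, h (W ω) = V ω) :
    entropy w V = entropy w W := by
  have h1 : entropy w (fun ω => (V ω, W ω)) = entropy w V := by
    have := entropy_pair_comp w V g
    simp only [hg] at this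
    exact this
  have h2 : entropy w (fun ω => (W ω, V ω)) = entropy w W := by
    have := entropy_pair_comp w W h
    simp only [hh] at this
    exact this
  have h3 : entropy w (fun ω => (W ω, V ω)) = entropy w (fun ω => (V ω, W ω)) :=
    entropy_comp_equiv w (fun ω => (V ω, W ω)) (Equiv.prodComm α β)
  linarith

/-- The conditional entropy of owner `d`'s encoded labeling function
given the combined encoded data of all owners satisfies the identity
`H(L_d | (O_0, …, O_{D−1})) = H(L_d | O_d) + H((O_{d'})_{d'≠d} | T_d(𝒳_d), L_d)
  − H((O_{d'})_{d'≠d} | O_d)`,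
where `L_d = L ∘ T_d⁻¹` and `O_d = {(T_d(x), L(x)) : x ∈ 𝒳_d}`. -/
theorem stmt11
    {Ω X Y : Type*} [Fintype Ω] [Fintype X] [Fintype Y]
    [DecidableEq X] [DecidableEq Y]
    {D : ℕ} (Z : Fin D → Type*) [∀ d, Fintype (Z d)] [∀ d, DecidableEq (Z d)]
    (w : Ω → ℝ) (hw0 : ∀ ω, 0 ≤ w ω) (hw1 : ∑ ω, w ω = 1)
    (L : X → Y)
    -- the random datasets and random bijective encoders of the `D` data-owners
    (𝒳 : Fin D → Ω → Finset X) (T : (d : Fin D) → Ω → (X ≃ Z d))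
    (d : Fin D)
    -- the labeled encoded datasets
    (O : (d : Fin D) → Ω → Finset (Z d × Y))
    (hO : ∀ d ω, O d ω = (𝒳 d ω).image (fun x => (T d ω x, L x))) :
    condEntropy w (fun ω => (fun z => L ((T d ω).symm z)))
        (fun ω => (fun d' : Fin D => O d' ω))
      = condEntropy w (fun ω => (fun z => L ((T d ω).symm z))) (O d)
        + condEntropy w (fun ω => (fun d' : {d' : Fin D // d' ≠ d} => O d'.1 ω))
            (fun ω => ((𝒳 d ω).image (⇑(T d ω)), fun z => L ((T d ω).symm z)))
        - condEntropy w (fun ω => (fun d' : {d' : Fin D // d' ≠ d} => O d'.1 ω)) (O d) := by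
  -- pointwise structural facts
  have hB : ∀ ω, (O d ω).image Prod.fst = (𝒳 d ω).image ⇑(T d ω) := by
    intro ω
    rw [hO d ω, Finset.image_image]
    rfl
  have hA : ∀ ω, ((𝒳 d ω).image ⇑(T d ω)).image
      (fun z => (z, L ((T d ω).symm z))) = O d ω := by
    intro ω
    rw [hO d ω, Finset.image_image]
    apply Finset.image_congr
    intro x _
    simp
  unfold condEntropy
  -- e3 : H(Ld, O_d) = H(TX_d, Ld)
  have e3 : entropy w (fun ω => ((fun z => L ((T d ω).symm z)), O d ω))
      = entropy w (fun ω => ((𝒳 d ω).image (⇑(T d ω)), fun z => L ((T d ω).symm z))) := by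
    refine entropy_congr w
      (fun p : (Z d → Y) × Finset (Z d × Y) => (p.2.image Prod.fst, p.1))
      (fun q : Finset (Z d) × (Z d → Y) => (q.2, q.1.image (fun z => (z, q.2 z))))
      (fun ω => ?_) (fun ω => ?_)
    · simp only [hB]
    · simp only [hA]
  -- e2 : H(O_all) = H(O_rest, O_d)
  have e2 : entropy w (fun ω => (fun d' : Fin D => O d' ω))
      = entropy w (fun ω =>
          ((fun d' : {d' : Fin D // d' ≠ d} => O d'.1 ω), O d ω)) := by
    refine entropy_congr w
      (fun f : (d' : Fin D) → Finset (Z d' × Y) => ((fun d' => f d'.1), f d))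
      (fun q : ((d' : {d' : Fin D // d' ≠ d}) → Finset (Z d'.1 × Y)) × Finset (Z d × Y) =>
        fun d' : Fin D => if hd : d' = d then
          cast (congrArg (fun i => Finset (Z i × Y)) hd.symm) q.2 else q.1 ⟨d', hd⟩)
      (fun ω => rfl) (fun ω => ?_)
    · funext d'
      by_cases hd : d' = d
      · subst hd
        simp
      · simp [hd]
  -- e1 : H(Ld, O_all) = H(O_rest, (TX_d, Ld))
  have e1 : entropy w (fun ω =>
        ((fun z => L ((T d ω).symm z)), (fun d' : Fin D => O d' ω)))
      = entropy w (fun ω =>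
        ((fun d' : {d' : Fin D // d' ≠ d} => O d'.1 ω),
          ((𝒳 d ω).image (⇑(T d ω)), fun z => L ((T d ω).symm z)))) := by
    refine entropy_congr w
      (fun p : (Z d → Y) × ((d' : Fin D) → Finset (Z d' × Y)) =>
        ((fun d' : {d' : Fin D // d' ≠ d} => p.2 d'.1), ((p.2 d).image Prod.fst, p.1)))
      (fun q : ((d' : {d' : Fin D // d' ≠ d}) → Finset (Z d'.1 × Y)) ×
          (Finset (Z d) × (Z d → Y)) =>
        (q.2.2, fun d' : Fin D => if hd : d' = d then
          cast (congrArg (fun i => Finset (Z i × Y)) hd.symm)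
            (q.2.1.image (fun z => (z, q.2.2 z))) else q.1 ⟨d', hd⟩))
      (fun ω => ?_) (fun ω => ?_)
    · simp only [hB]
    · refine Prod.ext rfl ?_
      funext d'
      by_cases hd : d' = d
      · subst hd
        simpa using hA ω
      · simp [hd]
  rw [e1, e2, e3]
  ring
end
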